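/- Let X and Y be real normed vector spaces with X infinite-dimensional, let T : X → Y be a bounded linear operator, and let E be a dense linear subspace of X. Then Γ(T|_E) ≤ Γ(T). -/

import Mathlib

/-- The operator norm of the restriction of `T` to a subspace `M`. -/
noncomputable def restrictedNorm {X Y : Type*} [NormedAddCommGroup X] [NormedSpace ℝ X]
    [NormedAddCommGroup Y] [NormedSpace ℝ Y] (T : X →L[ℝ] Y) (M : Submodule ℝ X) : ℝ :=
  ‖T.comp M.subtypeL‖

/-- `Γ(T) = inf_{M ∈ I(X)} ‖T|_M‖`, the infimum of the norms of the restrictions of `T`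
to infinite-dimensional subspaces of the domain. -/
noncomputable def opGamma {X Y : Type*} [NormedAddCommGroup X] [NormedSpace ℝ X]
    [NormedAddCommGroup Y] [NormedSpace ℝ Y] (T : X →L[ℝ] Y) : ℝ :=
  sInf {r : ℝ | ∃ M : Submodule ℝ X, ¬ FiniteDimensional ℝ M ∧ r = restrictedNorm T M}

/-!
Given an infinite-dimensional `M ≤ X` and `ε > 0`, choose a biorthogonal system `(vₙ, fₙ)` with
`vₙ ∈ M` (greedily: a new `v` in `M ⊓ ⋂ ker fᵢ` off the span of the old `vᵢ`, which exists as `M`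
is infinite-dimensional, and a Hahn–Banach `f` with `f v = 1` vanishing on that span), and, by
density, `eₙ ∈ E` with `‖fₙ‖ ‖eₙ - vₙ‖ ≤ δ / 2ⁿ⁺¹`. For `x = ∑ aₙ eₙ` the coefficients are read off
`y = ∑ aₙ vₙ ∈ M` as `aₙ = fₙ y`, so `‖x - y‖ ≤ ∑ |aₙ| ‖eₙ - vₙ‖ ≤ δ ‖y‖`, hence `‖x - y‖ ≤ 2δ ‖x‖`
once `δ ≤ 1/2`. Thus the `eₙ` are independent, and on their span
`‖T x‖ ≤ ‖T‖ ‖x - y‖ + ‖T|_M‖ ‖y‖ ≤ (‖T|_M‖ + 2δ (‖T‖ + ‖T|_M‖)) ‖x‖`.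
-/

open Submodule Set Finsupp

theorem Submodule.exists_mem_forall_eq_zero_notMem {K V ι : Type*} [Field K] [AddCommGroup V]
    [Module K V] [Finite ι] {M F : Submodule K V} (hM : ¬ FiniteDimensional K M)
    [FiniteDimensional K F] (g : ι → V →ₗ[K] K) :
    ∃ x ∈ M, (∀ i, g i x = 0) ∧ x ∉ F := by
  let φ : M →ₗ[K] ι → K := LinearMap.pi fun i => (g i).comp M.subtype
  have hker : ¬ FiniteDimensional K (LinearMap.ker φ) := fun _ =>
    have : Module.Finite K (M ⧸ LinearMap.ker φ) := CoFG.ker φ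
    hM (Module.Finite.of_submodule_quotient (LinearMap.ker φ))
  by_contra! hF
  have hKF : ∀ x : LinearMap.ker φ, ((x : M) : V) ∈ F := fun x =>
    hF x (x : M).2 fun i => congr_fun (LinearMap.mem_ker.1 x.2) i
  exact hker (.of_injective ((M.subtype.comp (LinearMap.ker φ).subtype).codRestrict F hKF)
    fun x y hxy => Subtype.ext (Subtype.ext congr(($hxy : V))))

section

variable {X : Type*} [NormedAddCommGroup X] [NormedSpace ℝ X]

theorem Submodule.exists_eq_one_forall_mem_eq_zero {F : Submodule ℝ X}
    (hF : IsClosed (F : Set X)) {x : X} (hx : x ∉ F) :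
    ∃ f : StrongDual ℝ X, f x = 1 ∧ ∀ z ∈ F, f z = 0 := by
  have := hF
  obtain ⟨g, hg⟩ := SeparatingDual.exists_eq_one (R := ℝ) (x := F.mkQ x)
    (by simpa [Quotient.mk_eq_zero] using hx)
  exact ⟨g.comp F.mkQL, hg, fun z hz => by simp [(Quotient.mk_eq_zero F).2 hz]⟩

def IsBiorthogonal {ι : Type*} [DecidableEq ι] (v : ι → X) (f : ι → StrongDual ℝ X) : Prop :=
  ∀ i j, f i (v j) = if i = j then 1 else 0

theorem Submodule.exists_isBiorthogonal_of_not_finiteDimensional {M : Submodule ℝ X}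
    (hM : ¬ FiniteDimensional ℝ M) :
    ∃ (v : ℕ → X) (f : ℕ → StrongDual ℝ X), (∀ n, v n ∈ M) ∧ IsBiorthogonal v f := by
  obtain ⟨φ, hφ, hφr⟩ := exists_seq_of_forall_finset_exists
    (fun p : X × StrongDual ℝ X => p.1 ∈ M ∧ p.2 p.1 = 1)
    (fun p q => p.2 q.1 = 0 ∧ q.2 p.1 = 0) fun s _ => by
      let F := span ℝ (Prod.fst '' (s : Set (X × StrongDual ℝ X)))
      have : FiniteDimensional ℝ F := .span_of_finite ℝ (s.finite_toSet.image _)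
      obtain ⟨x, hxM, hxs, hxF⟩ :=
        exists_mem_forall_eq_zero_notMem (F := F) hM fun p : s => (p.1.2 : X →ₗ[ℝ] ℝ)
      obtain ⟨f, hfx, hfF⟩ := exists_eq_one_forall_mem_eq_zero F.closed_of_finiteDimensional hxF
      exact ⟨(x, f), ⟨hxM, hfx⟩, fun p hp =>
        ⟨hxs ⟨p, hp⟩, hfF _ (subset_span (mem_image_of_mem _ hp))⟩⟩
  refine ⟨fun n => (φ n).1, fun n => (φ n).2, fun n => (hφ n).1, fun i j => ?_⟩
  rcases lt_trichotomy i j with h | rfl | h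
  · simp [(hφr i j h).1, h.ne]
  · simp [(hφ i).2]
  · simp [(hφr j i h).2, h.ne']

variable {v : ℕ → X} {f : ℕ → StrongDual ℝ X}

theorem IsBiorthogonal.apply_linearCombination (hvf : IsBiorthogonal v f) (a : ℕ →₀ ℝ) (i : ℕ) :
    f i (linearCombination ℝ v a) = a i := by
  simp [linearCombination_apply, map_finsuppSum, hvf i, eq_comm]

theorem IsBiorthogonal.linearIndependent (hvf : IsBiorthogonal v f) : LinearIndependent ℝ v :=
  linearIndependent_iff.2 fun a ha => Finsupp.ext fun i => by
    simp [← hvf.apply_linearCombination a i, ha]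

variable {e : ℕ → X} {δ : ℝ}

theorem IsBiorthogonal.norm_linearCombination_sub_le (hvf : IsBiorthogonal v f)
    (he : ∀ j, ‖f j‖ * ‖e j - v j‖ ≤ δ / 2 / 2 ^ j) (a : ℕ →₀ ℝ) :
    ‖linearCombination ℝ e a - linearCombination ℝ v a‖ ≤ δ * ‖linearCombination ℝ v a‖ := by
  set y := linearCombination ℝ v a
  have hδ : 0 ≤ δ := by
    have := (mul_nonneg (norm_nonneg _) (norm_nonneg _)).trans (he 0); norm_num at this; linarith
  have hsum : ∑ j ∈ a.support, δ / 2 / 2 ^ j ≤ δ :=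
    ((summable_geometric_two' δ).sum_le_tsum _ fun j _ => by positivity).trans_eq
      (tsum_geometric_two' δ)
  calc ‖linearCombination ℝ e a - y‖ = ‖∑ j ∈ a.support, a j • (e j - v j)‖ := by
        simp [y, linearCombination_apply, Finsupp.sum, smul_sub]
    _ ≤ ∑ j ∈ a.support, ‖a j • (e j - v j)‖ := norm_sum_le _ _
    _ ≤ ∑ j ∈ a.support, δ / 2 / 2 ^ j * ‖y‖ := Finset.sum_le_sum fun j _ => by
        rw [norm_smul, ← hvf.apply_linearCombination a j]
        calc ‖f j y‖ * ‖e j - v j‖ ≤ ‖f j‖ * ‖y‖ * ‖e j - v j‖ := by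
              gcongr; exact (f j).le_opNorm y
          _ = ‖f j‖ * ‖e j - v j‖ * ‖y‖ := by ring
          _ ≤ δ / 2 / 2 ^ j * ‖y‖ := by gcongr; exact he j
    _ = (∑ j ∈ a.support, δ / 2 / 2 ^ j) * ‖y‖ := (Finset.sum_mul _ _ _).symm
    _ ≤ δ * ‖y‖ := by gcongr

theorem IsBiorthogonal.norm_linearCombination_sub_le_two_mul (hvf : IsBiorthogonal v f)
    (he : ∀ j, ‖f j‖ * ‖e j - v j‖ ≤ δ / 2 / 2 ^ j) (hδ : δ ≤ 1 / 2) (a : ℕ →₀ ℝ) :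
    ‖linearCombination ℝ e a - linearCombination ℝ v a‖ ≤ 2 * δ * ‖linearCombination ℝ e a‖ := by
  have hδ₀ : 0 ≤ δ := by
    have := (mul_nonneg (norm_nonneg _) (norm_nonneg _)).trans (he 0); norm_num at this; linarith
  set x := linearCombination ℝ e a
  set y := linearCombination ℝ v a
  have h : ‖x - y‖ ≤ δ * ‖y‖ := hvf.norm_linearCombination_sub_le he a
  have hy : ‖y‖ ≤ ‖x‖ + ‖x - y‖ := by rw [norm_sub_rev]; exact norm_le_norm_add_norm_sub' y x
  nlinarith [norm_nonneg (x - y)]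

theorem IsBiorthogonal.linearIndependent_of_norm_sub_le (hvf : IsBiorthogonal v f)
    (he : ∀ j, ‖f j‖ * ‖e j - v j‖ ≤ δ / 2 / 2 ^ j) (hδ : δ ≤ 1 / 2) : LinearIndependent ℝ e :=
  linearIndependent_iff.2 fun a ha => linearIndependent_iff.1 hvf.linearIndependent a <| by
    simpa [ha] using hvf.norm_linearCombination_sub_le_two_mul he hδ a

theorem LinearIndependent.not_finiteDimensional_span {K V ι : Type*} [DivisionRing K]
    [AddCommGroup V] [Module K V] [Infinite ι] {v : ι → V} (hv : LinearIndependent K v) :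
    ¬ FiniteDimensional K (span K (range v)) := fun _ =>
  have := (linearIndependent_span hv).finite_of_isNoetherian
  not_finite ι

section restrictedNorm

variable {Y : Type*} [NormedAddCommGroup Y] [NormedSpace ℝ Y] (T : X →L[ℝ] Y)

theorem opGamma_eq_zero_of_finiteDimensional [FiniteDimensional ℝ X] : opGamma T = 0 := by
  simp [opGamma, FiniteDimensional.finiteDimensional_submodule]

theorem norm_apply_le_restrictedNorm {M : Submodule ℝ X} {x : X} (hx : x ∈ M) :
    ‖T x‖ ≤ restrictedNorm T M * ‖x‖ :=
  (T.comp M.subtypeL).le_opNorm ⟨x, hx⟩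

theorem restrictedNorm_comp_subtypeL_le_of_forall_exists_near {E M : Submodule ℝ X}
    (N : Submodule ℝ E) {δ : ℝ} (hδ : 0 ≤ δ)
    (h : ∀ x ∈ N, ∃ y ∈ M, ‖(x : X) - y‖ ≤ δ * ‖(x : X)‖) :
    restrictedNorm (T.comp E.subtypeL) N ≤
      restrictedNorm T M + δ * (‖T‖ + restrictedNorm T M) := by
  set c := restrictedNorm T M
  have hc : 0 ≤ c := ContinuousLinearMap.opNorm_nonneg _
  refine ((T.comp E.subtypeL).comp N.subtypeL).opNorm_le_bound (by positivity) fun z => ?_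
  obtain ⟨y, hyM, hxy⟩ := h z z.2
  set x : X := ((z : E) : X)
  have hy : ‖y‖ ≤ (1 + δ) * ‖x‖ := by linarith [norm_le_norm_add_norm_sub' y x, norm_sub_rev x y]
  calc ‖T x‖ = ‖T (x - y) + T y‖ := by rw [← map_add, sub_add_cancel]
    _ ≤ ‖T‖ * ‖x - y‖ + c * ‖y‖ :=
        norm_add_le_of_le (T.le_opNorm _) (norm_apply_le_restrictedNorm T hyM)
    _ ≤ ‖T‖ * (δ * ‖x‖) + c * ((1 + δ) * ‖x‖) := by gcongr
    _ = (c + δ * (‖T‖ + c)) * ‖x‖ := by ring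

theorem exists_not_finiteDimensional_restrictedNorm_comp_subtypeL_le {E M : Submodule ℝ X}
    (hE : Dense (E : Set X)) (hM : ¬ FiniteDimensional ℝ M) {ε : ℝ} (hε : 0 < ε) :
    ∃ N : Submodule ℝ E, ¬ FiniteDimensional ℝ N ∧
      restrictedNorm (T.comp E.subtypeL) N ≤ restrictedNorm T M + ε := by
  set c := restrictedNorm T M
  have hc : 0 ≤ c := ContinuousLinearMap.opNorm_nonneg _
  obtain ⟨δ, hδ₀, hδ, hδε⟩ : ∃ δ : ℝ, 0 < δ ∧ δ ≤ 1 / 2 ∧ 2 * δ * (‖T‖ + c) ≤ ε := by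
    obtain ⟨δ, hδ₀, hδε⟩ := exists_pos_mul_lt hε (2 * (‖T‖ + c))
    refine ⟨min δ (1 / 2), by positivity, min_le_right _ _, ?_⟩
    nlinarith [min_le_left δ (1 / 2), norm_nonneg T]
  obtain ⟨v, f, hvM, hvf⟩ := exists_isBiorthogonal_of_not_finiteDimensional hM
  have happrox : ∀ j, ∃ z : E, ‖f j‖ * ‖(z : X) - v j‖ ≤ δ / 2 / 2 ^ j := fun j => by
    obtain ⟨z, hzE, hz⟩ :=
      hE.exists_dist_lt (v j) (show 0 < δ / 2 / 2 ^ j / (‖f j‖ + 1) by positivity)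
    refine ⟨⟨z, hzE⟩, ?_⟩
    rw [dist_comm, dist_eq_norm, lt_div_iff₀ (by positivity)] at hz
    nlinarith [norm_nonneg (z - v j)]
  choose e he using happrox
  refine ⟨span ℝ (range e),
    ((hvf.linearIndependent_of_norm_sub_le he hδ).of_comp E.subtype).not_finiteDimensional_span,
    (restrictedNorm_comp_subtypeL_le_of_forall_exists_near T (M := M) (δ := 2 * δ) _
      (by positivity) fun x hx => ?_).trans (by linarith)⟩
  have hxe : (x : X) ∈ span ℝ (range fun j => (e j : X)) := by
    have := mem_map_of_mem (f := E.subtype) hx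
    rwa [map_span, ← range_comp] at this
  rw [← range_linearCombination] at hxe
  obtain ⟨a, ha⟩ := hxe
  refine ⟨linearCombination ℝ v a, ?_, ha ▸ hvf.norm_linearCombination_sub_le_two_mul he hδ a⟩
  exact span_le.2 (range_subset_iff.2 hvM) (range_linearCombination ℝ (v := v) ▸ ⟨a, rfl⟩)

end restrictedNorm

end

theorem gamma_restrict_le_general {X Y : Type*} [NormedAddCommGroup X] [NormedSpace ℝ X]
    [NormedAddCommGroup Y] [NormedSpace ℝ Y]
    (T : X →L[ℝ] Y) (E : Submodule ℝ X) (hE : Dense (E : Set X)) :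
    opGamma (T.comp E.subtypeL) ≤ opGamma T := by
  by_cases hX : FiniteDimensional ℝ X
  · rw [opGamma_eq_zero_of_finiteDimensional, opGamma_eq_zero_of_finiteDimensional]
  have hbdd : BddBelow {r : ℝ | ∃ N : Submodule ℝ E, ¬ FiniteDimensional ℝ N ∧
      r = restrictedNorm (T.comp E.subtypeL) N} :=
    ⟨0, by rintro _ ⟨N, -, rfl⟩; exact ContinuousLinearMap.opNorm_nonneg _⟩
  refine le_csInf ⟨_, ⊤, fun h => hX topEquiv.finiteDimensional, rfl⟩ ?_
  rintro _ ⟨M, hM, rfl⟩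
  refine le_of_forall_pos_le_add fun ε hε => ?_
  obtain ⟨N, hN, hNM⟩ := exists_not_finiteDimensional_restrictedNorm_comp_subtypeL_le T hE hM hε
  exact (csInf_le hbdd ⟨N, hN, rfl⟩).trans hNM

/-- `Γ(T|_E) ≤ Γ(T)` for any dense subspace `E`. -/
theorem gamma_restrict_le {X Y : Type*} [NormedAddCommGroup X] [NormedSpace ℝ X]
    [NormedAddCommGroup Y] [NormedSpace ℝ Y] (hX : ¬ FiniteDimensional ℝ X)
    (T : X →L[ℝ] Y) (E : Submodule ℝ X) (hE : Dense (E : Set X)) :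
    opGamma (T.comp E.subtypeL) ≤ opGamma T :=
  gamma_restrict_le_general T E hE
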